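/- arXiv:1907.08369 — 2 statements merged into one kernel-verified Lean document; each statement's English description precedes it below -/
import Mathlib

section
/- The variance of the unshifted asymmetric loss satisfies ∫ L(z)²·f(z) dz − (∫ L(z)·f(z) dz)² = (k₁² + k₂²)·b²·Γ(3a) / (2·Γ(a)) − (k₁ + k₂)²·b²·Γ(2a)² / (4·Γ(a)²). -/
open Real MeasureTheory Filter

/-- The asymmetric loss function. -/
noncomputable def asymLoss (k₁ k₂ z : ℝ) : ℝ := if 0 ≤ z then k₁ * z else -k₂ * z

/-- The generalized Gaussian density with mean zero. -/
noncomputable def genGauss (a b z : ℝ) : ℝ :=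
  (2 * a * b * Real.Gamma a)⁻¹ * Real.exp (-(|z / b| ^ (1 / a)))

/-- The lower incomplete gamma function. -/
noncomputable def lowerGamma (p x : ℝ) : ℝ := ∫ t in (0:ℝ)..x, t ^ (p - 1) * Real.exp (-t)

/-- The upper incomplete gamma function. -/
noncomputable def upperGamma (p x : ℝ) : ℝ := ∫ t in Set.Ioi x, t ^ (p - 1) * Real.exp (-t)

/-- The sign function used in the paper: `1` for `c ≥ 0`, `-1` for `c < 0`. -/
noncomputable def Sgn (c : ℝ) : ℝ := if 0 ≤ c then 1 else -1

/-!
The loss is linear on each half-line and the density is even, so the `n`-th moment of the loss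
splits into `k₁ⁿ + k₂ⁿ` times the half-line moment `∫₀^∞ zⁿ f(z) dz`. Substituting
`|z / b| ^ (1 / a) = b ^ (-1 / a) * z ^ (1 / a)` turns that into the Gamma integral
`∫₀^∞ z^s exp (-c z^p) dz = c ^ (-(s + 1) / p) Γ((s + 1) / p) / p`, giving
`bⁿ Γ((n + 1) a) / (2 Γ(a))`.
-/

open Set

lemma genGauss_neg (a b z : ℝ) : genGauss a b (-z) = genGauss a b z := by
  rw [genGauss, genGauss, neg_div, abs_neg]

lemma genGauss_of_nonneg {a b z : ℝ} (hb : 0 ≤ b) (hz : 0 ≤ z) :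
    genGauss a b z = (2 * a * b * Gamma a)⁻¹ * exp (-b ^ (-(1 / a)) * z ^ (1 / a)) := by
  rw [genGauss, abs_of_nonneg (div_nonneg hz hb), div_rpow hz hb, rpow_neg hb,
    div_eq_inv_mul, div_eq_inv_mul, neg_mul]

lemma integrableOn_Ioi_rpow_mul_genGauss {a b s : ℝ} (ha : 0 < a) (hb : 0 < b) (hs : -1 < s) :
    IntegrableOn (fun z => z ^ s * genGauss a b z) (Ioi 0) := by
  have h := (integrableOn_rpow_mul_exp_neg_mul_rpow hs (one_div_pos.mpr ha)
    (rpow_pos_of_pos hb (-(1 / a)))).const_mul (2 * a * b * Gamma a)⁻¹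
  refine IntegrableOn.congr_fun h (fun z hz => ?_) measurableSet_Ioi
  rw [genGauss_of_nonneg hb.le (le_of_lt hz)]
  ring

lemma integral_Ioi_rpow_mul_genGauss {a b s : ℝ} (ha : 0 < a) (hb : 0 < b) (hs : -1 < s) :
    ∫ z in Ioi 0, z ^ s * genGauss a b z = b ^ s * Gamma ((s + 1) * a) / (2 * Gamma a) := by
  have hΓ : Gamma a ≠ 0 := (Gamma_pos_of_pos ha).ne'
  calc ∫ z in Ioi 0, z ^ s * genGauss a b z
      = (2 * a * b * Gamma a)⁻¹ * ∫ z in Ioi 0, z ^ s * exp (-b ^ (-(1 / a)) * z ^ (1 / a)) := by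
        rw [← integral_const_mul]
        refine setIntegral_congr_fun measurableSet_Ioi (fun z hz => ?_)
        rw [genGauss_of_nonneg hb.le (le_of_lt hz)]
        ring
    _ = (2 * a * b * Gamma a)⁻¹ * (b ^ (s + 1) * a * Gamma ((s + 1) * a)) := by
        rw [integral_rpow_mul_exp_neg_mul_rpow (one_div_pos.mpr ha) hs (rpow_pos_of_pos hb _),
          ← rpow_mul hb.le, one_div_one_div]
        have hexp : -(1 / a) * (-(s + 1) / (1 / a)) = s + 1 := by field_simp
        have harg : (s + 1) / (1 / a) = (s + 1) * a := by field_simp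
        rw [hexp, harg]
    _ = b ^ s * Gamma ((s + 1) * a) / (2 * Gamma a) := by
        rw [rpow_add_one hb.ne']
        field_simp

lemma integral_eq_integral_Ioi_add_integral_Ioi_comp_neg {E : Type*} [NormedAddCommGroup E]
    [NormedSpace ℝ E] {f : ℝ → E} (hpos : IntegrableOn f (Ioi 0))
    (hneg : IntegrableOn (fun x => f (-x)) (Ioi 0)) :
    ∫ x, f x = (∫ x in Ioi 0, f x) + ∫ x in Ioi 0, f (-x) := by
  have hIic : IntegrableOn f (Iic 0) := by
    have m : MeasurableEmbedding fun x : ℝ => -x := (Homeomorph.neg ℝ).measurableEmbedding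
    rw [← Measure.map_neg_eq_self (volume : Measure ℝ), m.integrableOn_map_iff, neg_preimage,
      neg_Iic, neg_zero, integrableOn_Ici_iff_integrableOn_Ioi]
    exact hneg
  rw [← intervalIntegral.integral_Iic_add_Ioi hIic hpos, integral_comp_neg_Ioi, neg_zero,
    add_comm]

lemma asymLoss_of_pos {k₁ k₂ z : ℝ} (hz : 0 < z) : asymLoss k₁ k₂ z = k₁ * z :=
  if_pos hz.le

lemma asymLoss_neg_of_pos {k₁ k₂ z : ℝ} (hz : 0 < z) : asymLoss k₁ k₂ (-z) = k₂ * z := by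
  rw [asymLoss, if_neg (by linarith)]
  ring

lemma integral_asymLoss_pow_mul_genGauss (k₁ k₂ : ℝ) {a b : ℝ} (ha : 0 < a) (hb : 0 < b)
    (n : ℕ) :
    ∫ z, asymLoss k₁ k₂ z ^ n * genGauss a b z
      = (k₁ ^ n + k₂ ^ n) * (b ^ n * Gamma ((n + 1) * a) / (2 * Gamma a)) := by
  have hn : (-1 : ℝ) < n := by linarith [n.cast_nonneg (α := ℝ)]
  have hmoment := integrableOn_Ioi_rpow_mul_genGauss ha hb hn
  have hright : EqOn (fun z => k₁ ^ n * (z ^ (n : ℝ) * genGauss a b z))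
      (fun z => asymLoss k₁ k₂ z ^ n * genGauss a b z) (Ioi 0) := fun z hz => by
    simp only [asymLoss_of_pos hz, rpow_natCast]
    ring
  have hleft : EqOn (fun z => k₂ ^ n * (z ^ (n : ℝ) * genGauss a b z))
      (fun z => asymLoss k₁ k₂ (-z) ^ n * genGauss a b (-z)) (Ioi 0) := fun z hz => by
    simp only [asymLoss_neg_of_pos hz, genGauss_neg, rpow_natCast]
    ring
  rw [integral_eq_integral_Ioi_add_integral_Ioi_comp_neg
      (IntegrableOn.congr_fun (hmoment.const_mul _) hright measurableSet_Ioi)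
      (IntegrableOn.congr_fun (hmoment.const_mul _) hleft measurableSet_Ioi),
    ← setIntegral_congr_fun measurableSet_Ioi hright,
    ← setIntegral_congr_fun measurableSet_Ioi hleft, integral_const_mul, integral_const_mul,
    integral_Ioi_rpow_mul_genGauss ha hb hn, rpow_natCast]
  ring

theorem variance_unshifted_loss_general (a b k₁ k₂ : ℝ) (ha : 0 < a) (hb : 0 < b) :
    (∫ z, (asymLoss k₁ k₂ z) ^ 2 * genGauss a b z)
      - (∫ z, asymLoss k₁ k₂ z * genGauss a b z) ^ 2 =
      (k₁ ^ 2 + k₂ ^ 2) * b ^ 2 * Real.Gamma (3 * a) / (2 * Real.Gamma a)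
      - (k₁ + k₂) ^ 2 * b ^ 2 * Real.Gamma (2 * a) ^ 2 / (4 * Real.Gamma a ^ 2) := by
  have hΓ : Gamma a ≠ 0 := (Gamma_pos_of_pos ha).ne'
  have hsecond := integral_asymLoss_pow_mul_genGauss k₁ k₂ ha hb 2
  have hfirst := integral_asymLoss_pow_mul_genGauss k₁ k₂ ha hb 1
  simp only [pow_one] at hfirst
  rw [hsecond, hfirst]
  norm_num
  field_simp
  ring

theorem variance_unshifted_loss (a b k₁ k₂ : ℝ) (ha : 0 < a) (hb : 0 < b)
    (hk₁ : 0 < k₁) (hk₂ : 0 < k₂) :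
    (∫ z, (asymLoss k₁ k₂ z) ^ 2 * genGauss a b z)
      - (∫ z, asymLoss k₁ k₂ z * genGauss a b z) ^ 2 =
      (k₁ ^ 2 + k₂ ^ 2) * b ^ 2 * Real.Gamma (3 * a) / (2 * Real.Gamma a)
      - (k₁ + k₂) ^ 2 * b ^ 2 * Real.Gamma (2 * a) ^ 2 / (4 * Real.Gamma a ^ 2) :=
  variance_unshifted_loss_general a b k₁ k₂ ha hb
end

section
/- In the Laplace case a = 1: for every real c, ∫_{-∞}^{∞} L(z + c)·f(z) dz = L(c) + ((k₁ + k₂)·b/2)·exp(−|c/b|), where f(z) = (2·b)⁻¹·exp(−|z/b|). -/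
open Real MeasureTheory Filter

/-! Write `L x = k₁ x + (k₁ + k₂) x⁻`. The Laplace density has mass one and mean zero, so the
expected loss is `k₁ c + (k₁ + k₂) ∫ (z + c)⁻ f z`. For `c ≥ 0` the substitution `z = -(x + c)`
turns the last integral into `∫_{x > 0} x f (x + c) = e^{-c/b} ∫_{x > 0} x e^{-x/b} / (2b)`,
a Gamma integral equal to `b e^{-c/b} / 2`. The case `c < 0` follows from the symmetry
`z ↦ -z` of the density, which exchanges `k₁` and `k₂`. -/

open Set
open scoped Nat

theorem integral_pow_mul_exp_neg_div_Ioi {b : ℝ} (hb : 0 < b) (n : ℕ) :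
    ∫ x in Ioi 0, x ^ n * exp (-(x / b)) = n ! * b ^ (n + 1) := by
  have h := integral_rpow_mul_exp_neg_mul_Ioi (a := n + 1) (by positivity) (one_div_pos.2 hb)
  simp only [add_sub_cancel_right, rpow_natCast, one_div_one_div, Gamma_nat_eq_factorial] at h
  rw [← rpow_natCast, Nat.cast_add_one]
  simpa only [one_div, ← div_eq_inv_mul, mul_comm (n ! : ℝ)] using h

noncomputable def laplaceDensity (b z : ℝ) : ℝ := (2 * b)⁻¹ * exp (-|z / b|)

section LaplaceDensity

variable {b c : ℝ}

theorem laplaceDensity_neg (z : ℝ) : laplaceDensity b (-z) = laplaceDensity b z := by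
  rw [laplaceDensity, neg_div, abs_neg, laplaceDensity]

theorem laplaceDensity_nonneg (hb : 0 ≤ b) (z : ℝ) : 0 ≤ laplaceDensity b z := by
  unfold laplaceDensity
  positivity

theorem laplaceDensity_of_nonneg (hb : 0 ≤ b) {z : ℝ} (hz : 0 ≤ z) :
    laplaceDensity b z = (2 * b)⁻¹ * exp (-(z / b)) := by
  rw [laplaceDensity, abs_of_nonneg (div_nonneg hz hb)]

theorem integral_abs_pow_mul_laplaceDensity (hb : 0 < b) (n : ℕ) :
    ∫ z, |z| ^ n * laplaceDensity b z = n ! * b ^ n := by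
  have h := integral_comp_abs (f := fun x => x ^ n * exp (-(x / b)))
  rw [integral_pow_mul_exp_neg_div_Ioi hb] at h
  calc ∫ z, |z| ^ n * laplaceDensity b z = (2 * b)⁻¹ * ∫ z, |z| ^ n * exp (-(|z| / b)) := by
        rw [← integral_const_mul]
        congr 1 with z
        rw [laplaceDensity, abs_div, abs_of_pos hb]
        ring
    _ = n ! * b ^ n := by
        rw [h]
        field_simp
        ring

theorem integrable_abs_pow_mul_laplaceDensity (hb : 0 < b) (n : ℕ) :
    Integrable fun z => |z| ^ n * laplaceDensity b z :=
  Integrable.of_integral_ne_zero <| by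
    rw [integral_abs_pow_mul_laplaceDensity hb]
    positivity

theorem integral_laplaceDensity (hb : 0 < b) : ∫ z, laplaceDensity b z = 1 := by
  simpa using integral_abs_pow_mul_laplaceDensity hb 0

theorem integrable_laplaceDensity (hb : 0 < b) : Integrable (laplaceDensity b) := by
  simpa using integrable_abs_pow_mul_laplaceDensity hb 0

theorem integral_mul_laplaceDensity : ∫ z, z * laplaceDensity b z = 0 := by
  have h := integral_neg_eq_self (fun z => z * laplaceDensity b z) volume
  simp only [laplaceDensity_neg, neg_mul, integral_neg] at h
  linarith

theorem integrable_mul_laplaceDensity (hb : 0 < b) :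
    Integrable fun z => z * laplaceDensity b z := by
  refine (integrable_norm_iff ?_).1 ?_
  · exact (continuous_id.mul (by unfold laplaceDensity; fun_prop)).aestronglyMeasurable
  · convert integrable_abs_pow_mul_laplaceDensity hb 1 using 2 with z
    rw [norm_mul, norm_eq_abs, pow_one, norm_of_nonneg (laplaceDensity_nonneg hb.le z)]

theorem integral_negPart_add_mul_laplaceDensity (hb : 0 < b) (hc : 0 ≤ c) :
    ∫ z, (z + c)⁻ * laplaceDensity b z = b / 2 * exp (-(c / b)) := by
  rw [← integral_neg_eq_self, ← integral_add_right_eq_self _ c]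
  have hshift (x : ℝ) : -(x + c) + c = -x := by ring
  simp only [hshift, negPart_neg, laplaceDensity_neg]
  rw [← setIntegral_eq_integral_of_forall_compl_eq_zero (s := Ioi 0)
    fun x hx => by rw [posPart_eq_zero.2 (not_lt.1 hx), zero_mul]]
  calc ∫ x in Ioi 0, x⁺ * laplaceDensity b (x + c)
      = ∫ x in Ioi 0, (2 * b)⁻¹ * exp (-(c / b)) * (x ^ 1 * exp (-(x / b))) := by
        refine setIntegral_congr_fun measurableSet_Ioi fun x (hx : 0 < x) => ?_
        rw [posPart_eq_self.2 hx.le, laplaceDensity_of_nonneg hb.le (by linarith), add_div,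
          neg_add, exp_add]
        ring
    _ = b / 2 * exp (-(c / b)) := by
        rw [integral_const_mul, integral_pow_mul_exp_neg_div_Ioi hb]
        field_simp
        ring

theorem integrable_negPart_add_mul_laplaceDensity (hb : 0 < b) (hc : 0 ≤ c) :
    Integrable fun z => (z + c)⁻ * laplaceDensity b z :=
  Integrable.of_integral_ne_zero <| by
    rw [integral_negPart_add_mul_laplaceDensity hb hc]
    positivity

end LaplaceDensity

theorem asymLoss_eq_mul_add_negPart (k₁ k₂ x : ℝ) :
    asymLoss k₁ k₂ x = k₁ * x + (k₁ + k₂) * x⁻ := by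
  rcases le_or_gt 0 x with hx | hx
  · rw [asymLoss, if_pos hx, negPart_eq_zero.2 hx]
    ring
  · rw [asymLoss, if_neg hx.not_ge, negPart_eq_neg.2 hx.le]
    ring

theorem asymLoss_neg (k₁ k₂ x : ℝ) : asymLoss k₁ k₂ (-x) = asymLoss k₂ k₁ x := by
  rw [asymLoss_eq_mul_add_negPart, asymLoss_eq_mul_add_negPart, negPart_neg]
  linear_combination (k₁ + k₂) * posPart_sub_negPart x

theorem integral_asymLoss_add_mul_laplaceDensity_of_nonneg (k₁ k₂ : ℝ) {b c : ℝ} (hb : 0 < b)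
    (hc : 0 ≤ c) :
    ∫ z, asymLoss k₁ k₂ (z + c) * laplaceDensity b z =
      asymLoss k₁ k₂ c + (k₁ + k₂) * b / 2 * exp (-|c / b|) := by
  have hsplit : (fun z => asymLoss k₁ k₂ (z + c) * laplaceDensity b z) = fun z =>
      (k₁ * (z * laplaceDensity b z) + k₁ * c * laplaceDensity b z) +
        (k₁ + k₂) * ((z + c)⁻ * laplaceDensity b z) := by
    ext z
    rw [asymLoss_eq_mul_add_negPart]
    ring
  have hmean := (integrable_mul_laplaceDensity hb).const_mul k₁
  have hmass := (integrable_laplaceDensity hb).const_mul (k₁ * c)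
  have htail := (integrable_negPart_add_mul_laplaceDensity hb hc).const_mul (k₁ + k₂)
  rw [hsplit, integral_add ?_ htail, integral_add hmean hmass, integral_const_mul,
    integral_const_mul, integral_const_mul, integral_mul_laplaceDensity, integral_laplaceDensity hb,
    integral_negPart_add_mul_laplaceDensity hb hc, asymLoss, if_pos hc,
    abs_of_nonneg (div_nonneg hc hb.le)]
  · ring
  · exact hmean.add hmass

theorem expected_shifted_loss_laplace_general (b k₁ k₂ : ℝ) (hb : 0 < b) (c : ℝ)
    (f : ℝ → ℝ) (hf : ∀ z, f z = (2 * b)⁻¹ * Real.exp (-|z / b|)) :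
    ∫ z, asymLoss k₁ k₂ (z + c) * f z =
      asymLoss k₁ k₂ c + (k₁ + k₂) * b / 2 * Real.exp (-|c / b|) := by
  obtain rfl : f = laplaceDensity b := funext hf
  rcases le_or_gt 0 c with hc | hc
  · exact integral_asymLoss_add_mul_laplaceDensity_of_nonneg k₁ k₂ hb hc
  · have h := integral_asymLoss_add_mul_laplaceDensity_of_nonneg k₂ k₁ hb (neg_nonneg.2 hc.le)
    rw [asymLoss_neg, neg_div, abs_neg, add_comm k₂] at h
    rw [← h, ← integral_neg_eq_self]
    congr 1 with z
    rw [laplaceDensity_neg, ← asymLoss_neg, neg_add, neg_neg]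

theorem expected_shifted_loss_laplace (b k₁ k₂ : ℝ) (hb : 0 < b)
    (hk₁ : 0 < k₁) (hk₂ : 0 < k₂) (c : ℝ)
    (f : ℝ → ℝ) (hf : ∀ z, f z = (2 * b)⁻¹ * Real.exp (-|z / b|)) :
    ∫ z, asymLoss k₁ k₂ (z + c) * f z =
      asymLoss k₁ k₂ c + (k₁ + k₂) * b / 2 * Real.exp (-|c / b|) :=
  expected_shifted_loss_laplace_general b k₁ k₂ hb c f hf
end
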